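/- Let b, m, r ∈ ℕ with m ≥ 1 and r ≥ b + 1, and set n = r + b − 1 (so the tableaux below have shape (r−1, b)). Then |T(m, r+b−1, b)_r| + 1 = |T(m, r+b−1, b)_{r−1}| + |MP^m_b(r)|. -/

import Mathlib

open scoped BigOperators

/-- The set of semistandard Young tableaux of the two-row shape `(n-k, k)` with entries in
`{0, 1, …, m}` whose entries sum to `r`: a tableau is recorded as the pair of its two rows,
weakly increasing along rows and strictly increasing down the (first `k`) columns. -/
def TwoRowSSYT (m n k r : ℕ) : Set ((Fin (n - k) → ℕ) × (Fin k → ℕ)) :=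
  {t | Monotone t.1 ∧ Monotone t.2 ∧
    (∀ (j : ℕ) (hk : j < k) (hnk : j < n - k), t.1 ⟨j, hnk⟩ < t.2 ⟨j, hk⟩) ∧
    (∀ i, t.1 i ≤ m) ∧ (∀ j, t.2 j ≤ m) ∧
    ((∑ i, t.1 i) + (∑ j, t.2 j) = r)}

/-- `PPset b m r` is the set of pairs `(γ, π)` of partitions (recorded as multisets of positive
natural numbers) such that `γ` has exactly `b` parts, all parts of `γ` and `π` are at most `m`,
and `|γ| + |π| = r`. -/
def PPset (b m r : ℕ) : Set (Multiset ℕ × Multiset ℕ) :=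
  {p | (∀ x ∈ p.1, 0 < x) ∧ (∀ x ∈ p.2, 0 < x) ∧
    Multiset.card p.1 = b ∧ (∀ x ∈ p.1, x ≤ m) ∧ (∀ x ∈ p.2, x ≤ m) ∧
    p.1.sum + p.2.sum = r}

/-- `MPset b r` is the set of `b`-marked partitions of `r`: pairs `(γ, ε)` of partitions
(multisets of positive natural numbers) with `γ` having exactly `b` parts, `ε` having no parts
equal to `1`, and `|γ| + |ε| = r`. -/
def MPset (b r : ℕ) : Set (Multiset ℕ × Multiset ℕ) :=
  {p | (∀ x ∈ p.1, 0 < x) ∧ (∀ x ∈ p.2, 0 < x) ∧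
    Multiset.card p.1 = b ∧ (∀ x ∈ p.2, x ≠ 1) ∧
    p.1.sum + p.2.sum = r}

/-- `MPmset M b r` is the subset of `MPset b r` of those `(γ, ε)` all of whose parts are
at most `M`. -/
def MPmset (M b r : ℕ) : Set (Multiset ℕ × Multiset ℕ) :=
  {p | p ∈ MPset b r ∧ (∀ x ∈ p.1, x ≤ M) ∧ (∀ x ∈ p.2, x ≤ M)}

/-!
Reading off the second row as `γ` and the nonzero entries of the first row as `ε` maps a tableau
of shape `(n - k, k)` and weight `s` injectively into `PPset k m s`, because a weakly increasing
row is determined by the multiset of its entries. Conversely, the tableau whose first row is `ε`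
sorted after enough zeros exists as soon as `ε` has at most `n - 2k` parts. For `s ≤ n - k` this
always holds, and for `s = n - k + 1` it fails only for the pair whose parts are all `1`. With
`n = r + b - 1` and `k = b`, the identity thus reduces to
`|PPset b m r| = |PPset b m (r - 1)| + |MPmset m b r|`, which follows by removing a part `1`
from `ε` when there is one.
-/

open Finset

namespace Multiset

theorem card_le_sum_of_pos {s : Multiset ℕ} (hs : ∀ x ∈ s, 0 < x) : card s ≤ s.sum := by
  simpa using card_nsmul_le_sum hs

theorem eq_replicate_one_of_sum_le_card {s : Multiset ℕ} (hs : ∀ x ∈ s, 0 < x)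
    (h : s.sum ≤ card s) : s = replicate (card s) 1 := by
  refine eq_replicate.2 ⟨rfl, fun x hx => ?_⟩
  obtain ⟨t, rfl⟩ := exists_cons_of_mem hx
  have ht := card_le_sum_of_pos fun y hy => hs y (mem_cons_of_mem hy)
  have hx0 := hs x hx
  simp only [sum_cons, card_cons] at h
  omega

theorem replicate_add_filter_pos (M : Multiset ℕ) :
    replicate (card M - card (M.filter (0 < ·))) 0 + M.filter (0 < ·) = M := by
  have hcard := congrArg card (filter_add_not (0 < ·) M)
  rw [card_add] at hcard
  have hzero : M.filter (¬ 0 < ·) = replicate (card M - card (M.filter (0 < ·))) 0 :=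
    eq_replicate.2 ⟨by omega, fun x hx => by have := (mem_filter.1 hx).2; omega⟩
  rw [← hzero, add_comm, filter_add_not]

theorem filter_pos_replicate_zero_add {s : Multiset ℕ} (hs : ∀ x ∈ s, 0 < x) (a : ℕ) :
    (replicate a 0 + s).filter (0 < ·) = s := by
  rw [filter_add, filter_eq_self.2 hs, filter_eq_nil.2 fun x hx => by simp [eq_of_mem_replicate hx]]
  simp

end Multiset

theorem Monotone.eq_of_map_univ_val_eq {α : Type*} [LinearOrder α] {n : ℕ} {f g : Fin n → α}
    (hf : Monotone f) (hg : Monotone g) (h : univ.val.map f = univ.val.map g) : f = g := by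
  rw [Fin.univ_val_map, Fin.univ_val_map, Multiset.coe_eq_coe] at h
  exact List.ofFn_injective (h.eq_of_sortedLE hf.sortedLE_ofFn hg.sortedLE_ofFn)

theorem Monotone.eq_of_filter_pos_map_univ_val_eq {n : ℕ} {f g : Fin n → ℕ}
    (hf : Monotone f) (hg : Monotone g)
    (h : (univ.val.map f).filter (0 < ·) = (univ.val.map g).filter (0 < ·)) : f = g := by
  refine hf.eq_of_map_univ_val_eq hg ?_
  rw [← Multiset.replicate_add_filter_pos (univ.val.map f),
    ← Multiset.replicate_add_filter_pos (univ.val.map g), h]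
  simp only [Multiset.card_map]

theorem card_filter_pos_map_univ_val_le {N k : ℕ} {f : Fin N → ℕ}
    (hf : ∀ i : Fin N, (i : ℕ) < k → f i = 0) :
    Multiset.card ((univ.val.map f).filter (0 < ·)) ≤ N - k := by
  rw [Multiset.filter_map, Multiset.card_map]
  change #{i | 0 < f i} ≤ N - k
  have hsub : ({i | 0 < f i} : Finset (Fin N)) ⊆ ({i | ¬ (i : ℕ) < k} : Finset (Fin N)) :=
    monotone_filter_right _ fun i _ hpos hik => (hf i hik ▸ hpos).false
  have hsplit := card_filter_add_card_filter_not (s := univ) (fun i : Fin N => (i : ℕ) < k)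
  rw [Fin.card_filter_val_lt, card_univ, Fintype.card_fin] at hsplit
  have := card_le_card hsub
  omega

def padSorted (n : ℕ) (s : Multiset ℕ) (i : Fin n) : ℕ :=
  (List.replicate (n - Multiset.card s) 0 ++ s.sort (· ≤ ·)).getD i 0

section padSorted

variable {n : ℕ} {s : Multiset ℕ}

theorem ofFn_padSorted (h : Multiset.card s ≤ n) :
    List.ofFn (padSorted n s) = List.replicate (n - Multiset.card s) 0 ++ s.sort (· ≤ ·) := by
  refine List.ext_getElem (by simp; omega) fun i _ hi => ?_
  rw [List.getElem_ofFn, padSorted, List.getD_eq_getElem _ _ hi]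

theorem map_univ_val_padSorted (h : Multiset.card s ≤ n) :
    univ.val.map (padSorted n s) = Multiset.replicate (n - Multiset.card s) 0 + s := by
  rw [Fin.univ_val_map, ofFn_padSorted h, ← Multiset.coe_add, Multiset.coe_replicate,
    Multiset.sort_eq]

theorem monotone_padSorted (h : Multiset.card s ≤ n) : Monotone (padSorted n s) := by
  rw [← List.sortedLE_ofFn_iff, ofFn_padSorted h, List.sortedLE_iff_pairwise,
    List.pairwise_append]
  exact ⟨(List.sortedLE_replicate _).pairwise, Multiset.pairwise_sort _ _,
    fun x hx _ _ => (List.eq_of_mem_replicate hx).symm ▸ Nat.zero_le _⟩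

theorem padSorted_eq_zero {i : Fin n} (hi : (i : ℕ) < n - Multiset.card s) :
    padSorted n s i = 0 := by
  rw [padSorted, List.getD_append _ _ _ _ (by simpa using hi),
    List.getD_eq_getElem _ _ (by simpa using hi), List.getElem_replicate]

theorem padSorted_mem (h : Multiset.card s ≤ n) (i : Fin n) :
    padSorted n s i ∈ Multiset.replicate (n - Multiset.card s) 0 + s :=
  map_univ_val_padSorted h ▸ Multiset.mem_map_of_mem _ (mem_univ_val i)

theorem sum_padSorted (h : Multiset.card s ≤ n) : ∑ i, padSorted n s i = s.sum := by
  rw [sum_eq_multiset_sum, map_univ_val_padSorted h]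
  simp

end padSorted

namespace PPset

variable {k m s : ℕ}

theorem card_add_le_of_mem {γ ε : Multiset ℕ} (hp : (γ, ε) ∈ PPset k m s) :
    Multiset.card ε + k ≤ s := by
  obtain ⟨hγpos, hεpos, hγcard, -, -, hsum⟩ := hp
  have hγ := Multiset.card_le_sum_of_pos hγpos
  have hε := Multiset.card_le_sum_of_pos hεpos
  simp only at *
  omega

theorem eq_replicate_one_of_le {γ ε : Multiset ℕ} (hp : (γ, ε) ∈ PPset k m s)
    (h : s ≤ Multiset.card ε + k) :
    (γ, ε) = (Multiset.replicate k 1, Multiset.replicate (s - k) 1) := by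
  obtain ⟨hγpos, hεpos, hγcard, -, -, hsum⟩ := hp
  have hγ := Multiset.card_le_sum_of_pos hγpos
  have hε := Multiset.card_le_sum_of_pos hεpos
  simp only at *
  have hγ' := Multiset.eq_replicate_one_of_sum_le_card hγpos (by omega)
  have hε' := Multiset.eq_replicate_one_of_sum_le_card hεpos (by omega)
  rw [hγcard] at hγ'
  rw [hε', show Multiset.card ε = s - k by omega, hγ']

theorem replicate_one_mem (hm : 1 ≤ m) (hks : k ≤ s) :
    (Multiset.replicate k 1, Multiset.replicate (s - k) 1) ∈ PPset k m s := by
  refine ⟨?_, ?_, Multiset.card_replicate _ _, ?_, ?_, ?_⟩ <;>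
    simp only [Multiset.mem_replicate, Multiset.sum_replicate, smul_eq_mul] <;> omega

theorem finite (k m s : ℕ) : (PPset k m s).Finite := by
  have hparts : {γ : Multiset ℕ | (∀ x ∈ γ, 0 < x) ∧ γ.sum ≤ s}.Finite := by
    refine ((Set.finite_Iic s).biUnion fun a _ =>
      Set.finite_range (Nat.Partition.parts : Nat.Partition a → _)).subset ?_
    rintro γ ⟨hpos, hsum⟩
    exact Set.mem_biUnion (x := γ.sum) hsum ⟨⟨γ, fun hx => hpos _ hx, rfl⟩, rfl⟩
  refine (hparts.prod hparts).subset ?_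
  rintro ⟨γ, ε⟩ ⟨hγpos, hεpos, -, -, -, hsum⟩
  exact ⟨⟨hγpos, by simp only at *; omega⟩, ⟨hεpos, by simp only at *; omega⟩⟩

theorem image_cons_one (hm : 1 ≤ m) (hs : 1 ≤ s) :
    Prod.map id (1 ::ₘ ·) '' PPset k m (s - 1) = PPset k m s ∩ {p | 1 ∈ p.2} := by
  ext ⟨γ, ε⟩
  simp only [PPset, Set.mem_image, Set.mem_inter_iff, Set.mem_ofPred_eq, Prod.exists,
    Prod.map_apply, id, Prod.mk.injEq]
  constructor
  · rintro ⟨γ, ε, ⟨hγpos, hεpos, hγcard, hγle, hεle, hsum⟩, rfl, rfl⟩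
    simp only [Multiset.mem_cons, Multiset.sum_cons, forall_eq_or_imp, true_or]
    exact ⟨⟨hγpos, ⟨one_pos, hεpos⟩, hγcard, hγle, ⟨hm, hεle⟩, by omega⟩, trivial⟩
  · rintro ⟨⟨hγpos, hεpos, hγcard, hγle, hεle, hsum⟩, hone⟩
    rw [← Multiset.cons_erase hone, Multiset.sum_cons] at hsum
    refine ⟨γ, ε.erase 1, ⟨hγpos, fun x hx => hεpos x (Multiset.mem_of_mem_erase hx), hγcard,
      hγle, fun x hx => hεle x (Multiset.mem_of_mem_erase hx), by omega⟩, rfl,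
      Multiset.cons_erase hone⟩

theorem sdiff_one_mem_eq_MPmset : PPset k m s \ {p | 1 ∈ p.2} = MPmset m k s := by
  ext ⟨γ, ε⟩
  simp only [MPmset, MPset, PPset, Set.mem_sdiff, Set.mem_ofPred_eq]
  constructor
  · rintro ⟨⟨hγpos, hεpos, hγcard, hγle, hεle, hsum⟩, hone⟩
    exact ⟨⟨hγpos, hεpos, hγcard, fun x hx h1 => hone (h1 ▸ hx), hsum⟩, hγle, hεle⟩
  · rintro ⟨⟨hγpos, hεpos, hγcard, hεne, hsum⟩, hγle, hεle⟩
    exact ⟨⟨hγpos, hεpos, hγcard, hγle, hεle, hsum⟩, fun hone => hεne 1 hone rfl⟩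

theorem ncard_eq_ncard_sub_one_add_ncard_MPmset (hm : 1 ≤ m) (hs : 1 ≤ s) :
    (PPset k m s).ncard = (PPset k m (s - 1)).ncard + (MPmset m k s).ncard := by
  have hinj : Function.Injective (Prod.map id (1 ::ₘ ·) : Multiset ℕ × Multiset ℕ → _) :=
    Function.injective_id.prodMap fun _ _ => (Multiset.cons_inj_right 1).1
  rw [← sdiff_one_mem_eq_MPmset, ← Set.ncard_image_of_injective (PPset k m (s - 1)) hinj,
    image_cons_one hm hs, Set.ncard_inter_add_ncard_sdiff_eq_ncard _ _ (finite k m s)]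

end PPset

namespace TwoRowSSYT

def toPartitionPair {N k : ℕ} (t : (Fin N → ℕ) × (Fin k → ℕ)) : Multiset ℕ × Multiset ℕ :=
  (univ.val.map t.2, (univ.val.map t.1).filter (0 < ·))

variable {m n k s : ℕ}

theorem injOn_toPartitionPair : Set.InjOn toPartitionPair (TwoRowSSYT m n k s) :=
  fun _ ⟨ht₁, ht₂, _⟩ _ ⟨hu₁, hu₂, _⟩ h =>
    Prod.ext (ht₁.eq_of_filter_pos_map_univ_val_eq hu₁ (congrArg Prod.snd h))
      (ht₂.eq_of_map_univ_val_eq hu₂ (congrArg Prod.fst h))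

theorem toPartitionPair_mem_PPset (hk : k ≤ n - k) {t : (Fin (n - k) → ℕ) × (Fin k → ℕ)}
    (ht : t ∈ TwoRowSSYT m n k s) : toPartitionPair t ∈ PPset k m s := by
  obtain ⟨-, -, hcol, hle₁, hle₂, hsum⟩ := ht
  have hpos₂ (j : Fin k) : 0 < t.2 j := (Nat.zero_le _).trans_lt (hcol j j.2 (j.2.trans_le hk))
  have hsum₁ := congrArg Multiset.sum (Multiset.replicate_add_filter_pos (univ.val.map t.1))
  rw [Multiset.sum_add, Multiset.sum_replicate, smul_zero, zero_add] at hsum₁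
  simp only [toPartitionPair, PPset, Set.mem_ofPred_eq, Multiset.mem_filter, Multiset.mem_map,
    mem_univ_val, true_and, Multiset.card_map, card_val, card_univ, Fintype.card_fin,
    hsum₁, ← sum_eq_multiset_sum]
  refine ⟨?_, fun _ hx => hx.2, ?_, ?_, by rw [add_comm, hsum]⟩
  · rintro _ ⟨j, rfl⟩
    exact hpos₂ j
  · rintro _ ⟨j, rfl⟩
    exact hle₂ j
  · rintro _ ⟨⟨i, rfl⟩, -⟩
    exact hle₁ i

theorem mem_image_toPartitionPair {γ ε : Multiset ℕ} (hp : (γ, ε) ∈ PPset k m s)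
    (hcard : Multiset.card ε + k ≤ n - k) : (γ, ε) ∈ toPartitionPair '' TwoRowSSYT m n k s := by
  simp only [PPset, Set.mem_ofPred_eq] at hp
  obtain ⟨hγpos, hεpos, hγcard, hγle, hεle, hsum⟩ := hp
  have hε : Multiset.card ε ≤ n - k := by omega
  have hγ : Multiset.card γ ≤ k := hγcard.le
  have hγmem (j : Fin k) : padSorted k γ j ∈ γ := by
    simpa [hγcard] using padSorted_mem hγ j
  refine ⟨(padSorted (n - k) ε, padSorted k γ),
    ⟨monotone_padSorted hε, monotone_padSorted hγ, fun j hjk hjn => ?_, fun i => ?_,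
      fun j => hγle _ (hγmem j), ?_⟩, ?_⟩
  · change padSorted (n - k) ε ⟨j, hjn⟩ < padSorted k γ ⟨j, hjk⟩
    rw [padSorted_eq_zero (by simp only; omega)]
    exact hγpos _ (hγmem ⟨j, hjk⟩)
  · change padSorted (n - k) ε i ≤ m
    rcases Multiset.mem_add.1 (padSorted_mem hε i) with h | h
    · simp [Multiset.eq_of_mem_replicate h]
    · exact hεle _ h
  · change ∑ i, padSorted (n - k) ε i + ∑ j, padSorted k γ j = s
    rw [sum_padSorted hε, sum_padSorted hγ, add_comm, hsum]
  · simp only [toPartitionPair, map_univ_val_padSorted hε, map_univ_val_padSorted hγ, hγcard,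
      Nat.sub_self, Multiset.replicate_zero, zero_add,
      Multiset.filter_pos_replicate_zero_add hεpos]

theorem card_le_of_toPartitionPair_fst_eq_replicate_one
    {t : (Fin (n - k) → ℕ) × (Fin k → ℕ)} (ht : t ∈ TwoRowSSYT m n k s)
    (h : (toPartitionPair t).1 = Multiset.replicate k 1) :
    Multiset.card (toPartitionPair t).2 ≤ n - k - k := by
  refine card_filter_pos_map_univ_val_le fun i hik => ?_
  have hmem := Multiset.mem_map_of_mem t.2 (mem_univ_val ⟨i, hik⟩)
  rw [show univ.val.map t.2 = _ from h] at hmem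
  have hone := Multiset.eq_of_mem_replicate hmem
  have hcol : t.1 i < t.2 ⟨i, hik⟩ := ht.2.2.1 i hik i.2
  omega

theorem image_toPartitionPair_of_le (hk : k ≤ n - k) (hs : s ≤ n - k) :
    toPartitionPair '' TwoRowSSYT m n k s = PPset k m s := by
  refine subset_antisymm (Set.image_subset_iff.2 fun t => toPartitionPair_mem_PPset hk) ?_
  rintro ⟨γ, ε⟩ hp
  exact mem_image_toPartitionPair hp ((PPset.card_add_le_of_mem hp).trans hs)

/-- A second row of ones forces zeros in the first `k` columns, so `ε` then has at most `n - 2k`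
parts. -/
theorem image_toPartitionPair_of_eq_add_one (hk : k ≤ n - k) (hs : s = n - k + 1) :
    toPartitionPair '' TwoRowSSYT m n k s
      = PPset k m s \ {(Multiset.replicate k 1, Multiset.replicate (s - k) 1)} := by
  apply subset_antisymm
  · rintro _ ⟨t, ht, rfl⟩
    refine ⟨toPartitionPair_mem_PPset hk ht, fun hbad => ?_⟩
    have hcard := card_le_of_toPartitionPair_fst_eq_replicate_one ht (congrArg Prod.fst hbad)
    rw [congrArg Prod.snd hbad, Multiset.card_replicate] at hcard
    omega
  · rintro ⟨γ, ε⟩ ⟨hp, hbad⟩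
    refine mem_image_toPartitionPair hp ?_
    by_contra! hlt
    exact hbad (PPset.eq_replicate_one_of_le hp (by omega))

end TwoRowSSYT

/-- For `m ≥ 1` and `r ≥ b + 1`, with `n = r + b − 1` (so the tableaux
have shape `(r−1, b)`), one has
`|T(m, r+b−1, b)_r| + 1 = |T(m, r+b−1, b)_{r−1}| + |MP^m_b(r)|`. -/
theorem twoRowSSYT_card_add_one_eq (b m r : ℕ) (hm : 1 ≤ m) (hr : b + 1 ≤ r) :
    (TwoRowSSYT m (r + b - 1) b r).ncard + 1
      = (TwoRowSSYT m (r + b - 1) b (r - 1)).ncard + (MPmset m b r).ncard := by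
  have hk : b ≤ r + b - 1 - b := by omega
  have hpred : (TwoRowSSYT m (r + b - 1) b (r - 1)).ncard = (PPset b m (r - 1)).ncard := by
    rw [← TwoRowSSYT.image_toPartitionPair_of_le hk (by omega),
      TwoRowSSYT.injOn_toPartitionPair.ncard_image]
  have hsucc : (TwoRowSSYT m (r + b - 1) b r).ncard + 1 = (PPset b m r).ncard := by
    rw [← TwoRowSSYT.injOn_toPartitionPair.ncard_image,
      TwoRowSSYT.image_toPartitionPair_of_eq_add_one hk (by omega)]
    exact Set.ncard_sdiff_singleton_add_one (PPset.replicate_one_mem hm (by omega))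
      (PPset.finite b m r)
  rw [hsucc, hpred, PPset.ncard_eq_ncard_sub_one_add_ncard_MPmset hm (by omega)]
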